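/- arXiv:2511.05670 — 2 statements merged into one kernel-verified Lean document; each statement's English description precedes it below -/
import Mathlib

section
/- Let n ≥ 1 and let φ̃ : ℝⁿ → ℝ be smooth, compactly supported, nonnegative and radial, say φ̃(x) = η(|x|) where η : [0, ∞) → ℝ is smooth with η' ≤ 0 (nonincreasing radial profile). Then the convolution ψ = φ̃ * φ̃ satisfies: for every x ∈ ℝⁿ and every R > 0, the derivative ∂_R (ψ(Rx)) = x · (∇ψ)(Rx) ≤ 0; consequently ψ(Rx) ≤ ψ(rx) for all 0 < r < R and all x ∈ ℝⁿ. -/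
open MeasureTheory RealInnerProductSpace Convolution

set_option maxHeartbeats 1000000

/-- the self-convolution of a smooth, compactly supported,
nonnegative radial function with nonincreasing profile is nonincreasing along
rays: `∂_R ψ(Rx) = ⟪x, ∇ψ(Rx)⟫ ≤ 0`, hence `ψ(Rx) ≤ ψ(rx)` for `0 < r < R`. -/
theorem self_convolution_ray_monotone (n : ℕ) (hn : 1 ≤ n)
    (φ : EuclideanSpace ℝ (Fin n) → ℝ) (η : ℝ → ℝ)
    (hφ : ContDiff ℝ (⊤ : ℕ∞) φ) (hsupp : HasCompactSupport φ)
    (hpos : ∀ x, 0 ≤ φ x)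
    (hη : ContDiff ℝ (⊤ : ℕ∞) η) (hrad : ∀ x, φ x = η ‖x‖)
    (hη' : ∀ t : ℝ, 0 ≤ t → deriv η t ≤ 0) :
    ∀ x : EuclideanSpace ℝ (Fin n), ∀ R : ℝ, 0 < R →
      (deriv (fun s : ℝ => (∫ y, φ y * φ (s • x - y))) R
          = ⟪x, gradient (fun z => ∫ y, φ y * φ (z - y)) (R • x)⟫ ∧
        deriv (fun s : ℝ => (∫ y, φ y * φ (s • x - y))) R ≤ 0) ∧
      ∀ r : ℝ, 0 < r → r < R →
        (∫ y, φ y * φ (R • x - y)) ≤ ∫ y, φ y * φ (r • x - y) := by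
  classical
  have hφc : Continuous φ := hφ.continuous
  have hloc : LocallyIntegrable φ (volume : Measure (EuclideanSpace ℝ (Fin n))) := hφc.locallyIntegrable
  set L : ℝ →L[ℝ] ℝ →L[ℝ] ℝ := ContinuousLinearMap.lsmul ℝ ℝ with hL
  set ψ : EuclideanSpace ℝ (Fin n) → ℝ := fun z => ∫ y, φ y * φ (z - y) with hψdef
  have hψconv : ψ = (φ ⋆[L, volume] φ) := by
    funext z
    rw [hψdef, convolution_def]
    simp [hL, smul_eq_mul]
  have hDfc : Continuous (fderiv ℝ φ) := hφ.continuous_fderiv (by simp)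
  have hψder : ∀ z : EuclideanSpace ℝ (Fin n), HasFDerivAt ψ ((φ ⋆[L.precompR (EuclideanSpace ℝ (Fin n)), volume] fderiv ℝ φ) z) z := by
    intro z
    rw [hψconv]
    exact hsupp.hasFDerivAt_convolution_right L hloc (hφ.of_le (by simp)) z
  have happly : ∀ (z v : EuclideanSpace ℝ (Fin n)), ((φ ⋆[L.precompR (EuclideanSpace ℝ (Fin n)), volume] fderiv ℝ φ) z) v
      = ∫ y, φ y * (fderiv ℝ φ (z - y) v) := by
    intro z v
    rw [convolution_def]
    have hint : Integrable (fun y => (L.precompR (EuclideanSpace ℝ (Fin n))) (φ y) (fderiv ℝ φ (z - y)))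
        (volume : Measure (EuclideanSpace ℝ (Fin n))) := by
      apply Continuous.integrable_of_hasCompactSupport
      · exact (L.precompR (EuclideanSpace ℝ (Fin n))).continuous₂.comp
          (hφc.prodMk (hDfc.comp (continuous_const.sub continuous_id)))
      · apply hsupp.mono
        intro y hy
        simp only [Function.mem_support, ne_eq] at hy ⊢
        intro h
        apply hy
        rw [h]
        simp
    rw [ContinuousLinearMap.integral_apply hint]
    refine integral_congr_ae (Filter.Eventually.of_forall fun y => ?_)
    simp only [hL, ContinuousLinearMap.precompR_apply, ContinuousLinearMap.compL_apply,
      ContinuousLinearMap.coe_comp', Function.comp_apply, ContinuousLinearMap.lsmul_apply,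
      smul_eq_mul]
  -- derivative of φ at nonzero points
  have hφfd : ∀ w : EuclideanSpace ℝ (Fin n), w ≠ 0 →
      HasFDerivAt φ ((deriv η ‖w‖ * ‖w‖⁻¹) • (innerSL ℝ w : EuclideanSpace ℝ (Fin n) →L[ℝ] ℝ)) w := by
    intro w hw
    have hw' : (0:ℝ) < ‖w‖ := norm_pos_iff.mpr hw
    have h1 : HasFDerivAt (fun y : EuclideanSpace ℝ (Fin n) => ⟪y, y⟫) ((2:ℝ) • (innerSL ℝ w : EuclideanSpace ℝ (Fin n) →L[ℝ] ℝ)) w := by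
      have h := (hasFDerivAt_id (𝕜 := ℝ) w).inner ℝ (hasFDerivAt_id w)
      refine h.congr_fderiv ?_
      ext v
      simp [fderivInnerCLM_apply, real_inner_comm, two_smul]
      try exact Finset.sum_congr rfl (fun i _ => mul_comm _ _)
    have h2 : HasDerivAt Real.sqrt (1 / (2 * ‖w‖)) (⟪w, w⟫ : ℝ) := by
      have hne : (⟪w, w⟫ : ℝ) ≠ 0 := by
        rw [real_inner_self_eq_norm_mul_norm]
        positivity
      have h := Real.hasDerivAt_sqrt hne
      have hs : Real.sqrt (⟪w, w⟫ : ℝ) = ‖w‖ := by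
        rw [real_inner_self_eq_norm_mul_norm, Real.sqrt_mul_self (norm_nonneg w)]
      rwa [hs] at h
    have h3 : HasFDerivAt (fun y : EuclideanSpace ℝ (Fin n) => Real.sqrt ⟪y, y⟫)
        ((1 / (2 * ‖w‖)) • ((2:ℝ) • (innerSL ℝ w : EuclideanSpace ℝ (Fin n) →L[ℝ] ℝ))) w :=
      HasDerivAt.comp_hasFDerivAt (f := fun y : EuclideanSpace ℝ (Fin n) => (⟪y, y⟫ : ℝ)) w h2 h1
    have h4 : (fun y : EuclideanSpace ℝ (Fin n) => Real.sqrt ⟪y, y⟫) = fun y : EuclideanSpace ℝ (Fin n) => ‖y‖ := by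
      funext y
      rw [real_inner_self_eq_norm_mul_norm, Real.sqrt_mul_self (norm_nonneg y)]
    rw [h4] at h3
    have h5 : HasFDerivAt φ
        (deriv η ‖w‖ • ((1 / (2 * ‖w‖)) • ((2:ℝ) • (innerSL ℝ w : EuclideanSpace ℝ (Fin n) →L[ℝ] ℝ)))) w := by
      have h6 := HasDerivAt.comp_hasFDerivAt (f := fun y : EuclideanSpace ℝ (Fin n) => ‖y‖) w
        ((hη.differentiable (by simp) ‖w‖).hasDerivAt) h3
      have hφeq : φ = fun y : EuclideanSpace ℝ (Fin n) => η ‖y‖ := funext hrad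
      rw [hφeq]
      exact h6
    convert h5 using 1
    ext v
    simp only [ContinuousLinearMap.coe_smul', Pi.smul_apply, smul_eq_mul]
    field_simp
  -- oddness of the derivative
  have hDodd : ∀ w v : EuclideanSpace ℝ (Fin n), fderiv ℝ φ (-w) v = - fderiv ℝ φ w v := by
    intro w v
    have h1 : HasFDerivAt (fun y : EuclideanSpace ℝ (Fin n) => φ (-y))
        ((fderiv ℝ φ (-w)).comp (-(ContinuousLinearMap.id ℝ (EuclideanSpace ℝ (Fin n))))) w :=
      ((hφ.differentiable (by simp) (-w)).hasFDerivAt).comp w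
        ((hasFDerivAt_id w).neg)
    have h2 : (fun y : EuclideanSpace ℝ (Fin n) => φ (-y)) = φ := funext fun y => by rw [hrad, hrad, norm_neg]
    rw [h2] at h1
    rw [h1.fderiv]
    simp
  have hanti : AntitoneOn η (Set.Ici (0:ℝ)) := by
    apply antitoneOn_of_deriv_nonpos (convex_Ici 0) hη.continuous.continuousOn
    · exact (hη.differentiable (by simp)).differentiableOn
    · intro t ht
      rw [interior_Ici] at ht
      exact hη' t ht.le
  have normle : ∀ a b : EuclideanSpace ℝ (Fin n), ‖a‖ ^ 2 ≤ ‖b‖ ^ 2 → ‖a‖ ≤ ‖b‖ := by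
    intro a b h
    have h2 := Real.sqrt_le_sqrt h
    rwa [Real.sqrt_sq (norm_nonneg a), Real.sqrt_sq (norm_nonneg b)] at h2
  intro x R hR
  -- the key sign estimate
  have key : ∀ s : ℝ, 0 < s → (∫ y, φ y * (fderiv ℝ φ (s • x - y) x)) ≤ 0 := by
    intro s hs
    set z : EuclideanSpace ℝ (Fin n) := s • x with hz
    set G : EuclideanSpace ℝ (Fin n) → ℝ := fun w => φ (z - w) * (fderiv ℝ φ w) x with hG
    have hGc : Continuous G :=
      (hφc.comp (continuous_const.sub continuous_id)).mul
        ((ContinuousLinearMap.apply ℝ ℝ x).continuous.comp hDfc)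
    have hGsupp : HasCompactSupport G := by
      have h1 : HasCompactSupport fun w : EuclideanSpace ℝ (Fin n) => φ (z - w) :=
        hsupp.comp_homeomorph (Homeomorph.subLeft z)
      exact h1.mul_right
    have hGint : Integrable G (volume : Measure (EuclideanSpace ℝ (Fin n))) :=
      hGc.integrable_of_hasCompactSupport hGsupp
    have hGneg : Integrable (fun w => G (-w)) (volume : Measure (EuclideanSpace ℝ (Fin n))) :=
      (hGc.comp continuous_neg).integrable_of_hasCompactSupport
        (hGsupp.comp_homeomorph (Homeomorph.neg (EuclideanSpace ℝ (Fin n))))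
    have h1 : (∫ y, φ y * (fderiv ℝ φ (z - y) x)) = ∫ w, G w := by
      rw [← integral_sub_left_eq_self G (volume : Measure (EuclideanSpace ℝ (Fin n))) z]
      congr 1
      funext y
      rw [hG]
      simp [sub_sub_cancel]
    have h2 : (∫ w, G w) + (∫ w, G w) = ∫ w, (G w + G (-w)) := by
      rw [integral_add hGint hGneg]
      congr 1
      exact (integral_neg_eq_self G (volume : Measure (EuclideanSpace ℝ (Fin n)))).symm
    have h3 : ∀ w : EuclideanSpace ℝ (Fin n), G w + G (-w) ≤ 0 := by
      intro w
      have hGsum : G w + G (-w) = (fderiv ℝ φ w x) * (φ (z - w) - φ (z + w)) := by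
        rw [hG]
        simp only [sub_neg_eq_add, hDodd w x]
        ring
      rw [hGsum, hrad (z - w), hrad (z + w)]
      have hzsub : ‖z - w‖ ^ 2 = ‖z‖ ^ 2 - 2 * (s * ⟪x, w⟫) + ‖w‖ ^ 2 := by
        rw [@norm_sub_sq_real, hz, real_inner_smul_left]
      have hzadd : ‖z + w‖ ^ 2 = ‖z‖ ^ 2 + 2 * (s * ⟪x, w⟫) + ‖w‖ ^ 2 := by
        rw [@norm_add_sq_real, hz, real_inner_smul_left]
      rcases lt_trichotomy (⟪x, w⟫ : ℝ) 0 with hu | hu | hu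
      · -- inner negative : derivative nonneg, η difference nonpos
        have hw : w ≠ 0 := by
          intro h
          rw [h, inner_zero_right] at hu
          exact lt_irrefl _ hu
        have hfd : fderiv ℝ φ w x = (deriv η ‖w‖ * ‖w‖⁻¹) * ⟪w, x⟫ := by
          rw [(hφfd w hw).fderiv]
          simp [smul_eq_mul]
        have hD : 0 ≤ fderiv ℝ φ w x := by
          rw [hfd]
          have h5 : deriv η ‖w‖ * ‖w‖⁻¹ ≤ 0 :=
            mul_nonpos_of_nonpos_of_nonneg (hη' _ (norm_nonneg w)) (by positivity)
          have h6 : (⟪w, x⟫ : ℝ) ≤ 0 := by rw [real_inner_comm]; exact hu.le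
          nlinarith
        have hle : ‖z + w‖ ≤ ‖z - w‖ := by
          apply normle
          rw [hzsub, hzadd]
          have h6 : s * ⟪x, w⟫ ≤ 0 := (mul_nonpos_of_nonneg_of_nonpos hs.le hu.le)
          linarith
        have hdiff : η ‖z - w‖ - η ‖z + w‖ ≤ 0 := by
          have := hanti (Set.mem_Ici.mpr (norm_nonneg (z + w)))
            (Set.mem_Ici.mpr (norm_nonneg (z - w))) hle
          linarith
        exact mul_nonpos_of_nonneg_of_nonpos hD hdiff
      · -- inner zero : norms equal
        have heq : ‖z - w‖ = ‖z + w‖ := by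
          have h5 : ‖z - w‖ ^ 2 = ‖z + w‖ ^ 2 := by rw [hzsub, hzadd, hu]; ring
          exact le_antisymm (normle _ _ h5.le) (normle _ _ h5.ge)
        rw [heq]
        simp
      · -- inner positive : derivative nonpos, η difference nonneg
        have hw : w ≠ 0 := by
          intro h
          rw [h, inner_zero_right] at hu
          exact lt_irrefl _ hu
        have hfd : fderiv ℝ φ w x = (deriv η ‖w‖ * ‖w‖⁻¹) * ⟪w, x⟫ := by
          rw [(hφfd w hw).fderiv]
          simp [smul_eq_mul]
        have hD : fderiv ℝ φ w x ≤ 0 := by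
          rw [hfd]
          have h5 : deriv η ‖w‖ * ‖w‖⁻¹ ≤ 0 :=
            mul_nonpos_of_nonpos_of_nonneg (hη' _ (norm_nonneg w)) (by positivity)
          have h6 : (0:ℝ) ≤ ⟪w, x⟫ := by rw [real_inner_comm]; exact hu.le
          exact mul_nonpos_of_nonpos_of_nonneg h5 h6
        have hle : ‖z - w‖ ≤ ‖z + w‖ := by
          apply normle
          rw [hzsub, hzadd]
          have h6 : 0 ≤ s * ⟪x, w⟫ := (mul_nonneg hs.le hu.le)
          linarith
        have hdiff : 0 ≤ η ‖z - w‖ - η ‖z + w‖ := by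
          have := hanti (Set.mem_Ici.mpr (norm_nonneg (z - w)))
            (Set.mem_Ici.mpr (norm_nonneg (z + w))) hle
          linarith
        exact mul_nonpos_of_nonpos_of_nonneg hD hdiff
    have h4 : (∫ w, (G w + G (-w))) ≤ 0 := integral_nonpos h3
    rw [h1]
    linarith
  -- derivative along the ray
  have hray : ∀ s : ℝ, HasDerivAt (fun t : ℝ => ψ (t • x))
      (((φ ⋆[L.precompR (EuclideanSpace ℝ (Fin n)), volume] fderiv ℝ φ) (s • x)) x) s := by
    intro s
    have h1 : HasDerivAt (fun t : ℝ => t • x) ((1:ℝ) • x) s := (hasDerivAt_id s).smul_const x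
    rw [one_smul] at h1
    exact (hψder (s • x)).comp_hasDerivAt s h1
  have hderiv : ∀ s : ℝ, deriv (fun t : ℝ => ψ (t • x)) s
      = ∫ y, φ y * (fderiv ℝ φ (s • x - y) x) := by
    intro s
    rw [(hray s).deriv, happly]
  constructor
  · constructor
    · -- deriv = inner with gradient
      have hgrad : HasGradientAt ψ (gradient ψ (R • x)) (R • x) :=
        (hψder (R • x)).differentiableAt.hasGradientAt
      have h6 := hgrad.hasFDerivAt.unique (hψder (R • x))
      show deriv (fun t : ℝ => ψ (t • x)) R = ⟪x, gradient ψ (R • x)⟫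
      rw [(hray R).deriv, real_inner_comm, ← InnerProductSpace.toDual_apply_apply, h6]
    · show deriv (fun t : ℝ => ψ (t • x)) R ≤ 0
      rw [hderiv]
      exact key R hR
  · intro r hr hrR
    have hmono : AntitoneOn (fun t : ℝ => ψ (t • x)) (Set.Ici 0) := by
      apply antitoneOn_of_deriv_nonpos (convex_Ici 0)
      · exact (fun t _ => ((hray t).differentiableAt.continuousAt).continuousWithinAt)
      · intro t ht
        exact (hray t).differentiableAt.differentiableWithinAt
      · intro t ht
        rw [interior_Ici] at ht
        rw [hderiv]
        exact key t ht
    exact hmono (Set.mem_Ici.mpr hr.le) (Set.mem_Ici.mpr (hr.trans hrR).le) hrR.le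
end

section
/- Let n ≥ 1, p > 1 with conjugate exponent p', and let l be an integer with l > 2p'. Let φ̃ : ℝⁿ → ℝ be smooth, compactly supported and nonnegative, and let η̃ : [0, ∞) → ℝ be smooth, nonincreasing, with support contained in [0, 1] and η̃(t) = 1 for t ∈ [0, 1/2]. Set φ = φ̃^l and η = η̃^l. Then the function (y, τ) ↦ φ(y)^{−1/p} η(τ)^{−1/p} | η''(τ) φ(y) − η'(τ) φ(y) − η(τ) Δφ(y) | is bounded on the set {(y, τ) : φ(y) η(τ) > 0}; consequently the integral ∫∫_{supp(φη)} φ(y)^{−p'/p} η(τ)^{−p'/p} | (∂_τ² − ∂_τ − Δ)(φ(y) η(τ)) |^{p'} dy dτ is finite. -/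
open MeasureTheory
open scoped ContDiff

private lemma q8_infty_one_le : (1 : WithTop ℕ∞) ≤ ∞ := by exact_mod_cast le_top
private lemma q8_infty_add_one_le : (∞ : WithTop ℕ∞) + 1 ≤ ∞ := by exact_mod_cast le_top

private lemma q8_deriv_pow_comp (f : ℝ → ℝ) (hf : ContDiff ℝ ∞ f) (l : ℕ) :
    deriv (fun t => f t ^ l) = fun t => (l : ℝ) * (f t ^ (l - 1) * deriv f t) := by
  funext t
  rw [deriv_fun_pow ((hf.differentiable (by simp)) t) l]; ring

private lemma q8_deriv2_pow_comp (f : ℝ → ℝ) (hf : ContDiff ℝ ∞ f) (l : ℕ) (hl : 2 ≤ l) (τ : ℝ) :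
    deriv (deriv (fun t => f t ^ l)) τ =
      (l : ℝ) * (((l : ℝ) - 1) * f τ ^ (l - 2) * (deriv f τ) ^ 2
        + f τ ^ (l - 1) * deriv (deriv f) τ) := by
  have hdf : Differentiable ℝ f := hf.differentiable (by simp)
  have hdf' : ContDiff ℝ ∞ (deriv f) := (contDiff_infty_iff_deriv.mp hf).2
  have hdf'd : Differentiable ℝ (deriv f) := hdf'.differentiable (by simp)
  rw [q8_deriv_pow_comp f hf l]
  have h1 : DifferentiableAt ℝ (fun t => f t ^ (l - 1)) τ := (hdf τ).pow _
  rw [deriv_const_mul _ (show DifferentiableAt ℝ (fun t => f t ^ (l - 1) * deriv f t) τ from h1.mul (hdf'd τ))]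
  rw [deriv_fun_mul h1 (hdf'd τ), deriv_fun_pow (hdf τ)]
  have h2 : l - 1 - 1 = l - 2 := by omega
  have h3 : ((l - 1 : ℕ) : ℝ) = (l : ℝ) - 1 := by
    have : 1 ≤ l := by omega
    push_cast [this]; ring
  rw [h2, h3]; ring

section FD

variable {E : Type*} [NormedAddCommGroup E] [NormedSpace ℝ E]

private lemma q8_contDiff_fderiv_apply (φ : E → ℝ) (hφ : ContDiff ℝ ∞ φ) (e : E) :
    ContDiff ℝ ∞ (fun x => fderiv ℝ φ x e) :=
  ContDiff.fderiv_apply (f := fun _ : E => φ) (g := id) (k := fun _ => e)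
    (hφ.comp contDiff_snd) contDiff_id contDiff_const q8_infty_add_one_le

private lemma q8_fderiv_pow_apply (φ : E → ℝ) (hφ : ContDiff ℝ ∞ φ) (l : ℕ) (e : E) (y : E) :
    fderiv ℝ (fun y' => φ y' ^ l) y e = (l : ℝ) * (φ y ^ (l - 1) * fderiv ℝ φ y e) := by
  have hfd : HasFDerivAt (fun y' => φ y' ^ l)
      (((l : ℝ) * φ y ^ (l - 1)) • fderiv ℝ φ y) y :=
    (hasDerivAt_pow l (φ y)).comp_hasFDerivAt y
      ((hφ.differentiable (by simp)) y).hasFDerivAt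
  rw [hfd.fderiv]; simp [smul_eq_mul]; ring

private lemma q8_fderiv2_pow_apply (φ : E → ℝ) (hφ : ContDiff ℝ ∞ φ) (l : ℕ) (hl : 2 ≤ l)
    (e : E) (x : E) :
    fderiv ℝ (fun y => fderiv ℝ (fun y' => φ y' ^ l) y e) x e =
      (l : ℝ) * (((l : ℝ) - 1) * φ x ^ (l - 2) * (fderiv ℝ φ x e) ^ 2
        + φ x ^ (l - 1) * fderiv ℝ (fun y => fderiv ℝ φ y e) x e) := by
  have hφd : Differentiable ℝ φ := hφ.differentiable (by simp)
  have h1 : ContDiff ℝ ∞ (fun x => fderiv ℝ φ x e) := q8_contDiff_fderiv_apply φ hφ e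
  have h1d : Differentiable ℝ (fun x => fderiv ℝ φ x e) := h1.differentiable (by simp)
  have heq : (fun y => fderiv ℝ (fun y' => φ y' ^ l) y e)
      = fun y => (l : ℝ) * (φ y ^ (l - 1) * fderiv ℝ φ y e) :=
    funext fun y => q8_fderiv_pow_apply φ hφ l e y
  rw [heq]
  have h2 : DifferentiableAt ℝ (fun y => φ y ^ (l - 1)) x := (hφd x).pow _
  have h3 : DifferentiableAt ℝ (fun y => φ y ^ (l - 1) * fderiv ℝ φ y e) x := h2.mul (h1d x)
  rw [fderiv_const_mul h3, fderiv_fun_mul h2 (h1d x)]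
  have hfp : fderiv ℝ (fun y => φ y ^ (l - 1)) x e
      = ((l - 1 : ℕ) : ℝ) * (φ x ^ (l - 1 - 1) * fderiv ℝ φ x e) :=
    q8_fderiv_pow_apply φ hφ _ e x
  have h2' : l - 1 - 1 = l - 2 := by omega
  have h3' : ((l - 1 : ℕ) : ℝ) = (l : ℝ) - 1 := by
    have : 1 ≤ l := by omega
    push_cast [this]; ring
  simp only [ContinuousLinearMap.smul_apply, ContinuousLinearMap.add_apply, smul_eq_mul, hfp,
    h2', h3']
  ring

end FD

/-- The Laplacian of a function on `ℝⁿ`, as the sum of its second partial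
derivatives along the standard coordinate directions. -/
noncomputable def eLap {n : ℕ} (f : EuclideanSpace ℝ (Fin n) → ℝ)
    (x : EuclideanSpace ℝ (Fin n)) : ℝ :=
  ∑ i : Fin n, fderiv ℝ (fun y => fderiv ℝ f y (EuclideanSpace.single i 1)) x
    (EuclideanSpace.single i 1)

/-- with `φ = φ̃^l`, `η = η̃^l` and `l > 2p'`, the function
`φ^{-1/p} η^{-1/p} |η''φ - η'φ - ηΔφ|` is bounded on `{φη > 0}`, and the
corresponding integral `∫∫ φ^{-p'/p} η^{-p'/p} |(∂_τ²-∂_τ-Δ)(φη)|^{p'}` over the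
support of `φη` is finite. -/
theorem test_function_quotient_bounded (n : ℕ) (hn : 1 ≤ n) (p p' : ℝ)
    (hp : 1 < p) (hp' : 1 / p + 1 / p' = 1) (l : ℕ) (hl : 2 * p' < (l : ℝ))
    (φt : EuclideanSpace ℝ (Fin n) → ℝ) (ηt : ℝ → ℝ)
    (hφs : ContDiff ℝ (⊤ : ℕ∞) φt) (hφc : HasCompactSupport φt) (hφ0 : ∀ x, 0 ≤ φt x)
    (hηs : ContDiff ℝ (⊤ : ℕ∞) ηt) (hηm : AntitoneOn ηt (Set.Ici 0))
    (hηsupp : ∀ t : ℝ, 1 < t → ηt t = 0)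
    (hη1 : ∀ t ∈ Set.Icc (0 : ℝ) (1 / 2), ηt t = 1) :
    (∃ M : ℝ, ∀ y : EuclideanSpace ℝ (Fin n), ∀ τ : ℝ, 0 ≤ τ →
        0 < φt y ^ l * ηt τ ^ l →
        (φt y ^ l) ^ (-(1 / p) : ℝ) * (ηt τ ^ l) ^ (-(1 / p) : ℝ) *
          |deriv (deriv (fun t => ηt t ^ l)) τ * φt y ^ l
            - deriv (fun t => ηt t ^ l) τ * φt y ^ l
            - ηt τ ^ l * eLap (fun y' => φt y' ^ l) y| ≤ M) ∧
    (∫⁻ q : EuclideanSpace ℝ (Fin n) × ℝ in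
        {q : EuclideanSpace ℝ (Fin n) × ℝ | 0 ≤ q.2 ∧ φt q.1 ^ l * ηt q.2 ^ l ≠ 0},
        ENNReal.ofReal ((φt q.1 ^ l) ^ (-(p' / p) : ℝ) * (ηt q.2 ^ l) ^ (-(p' / p) : ℝ) *
          |deriv (deriv (fun t => ηt t ^ l)) q.2 * φt q.1 ^ l
            - deriv (fun t => ηt t ^ l) q.2 * φt q.1 ^ l
            - ηt q.2 ^ l * eLap (fun y' => φt y' ^ l) q.1| ^ p')) < ⊤ := by
  classical
  -- basic exponent facts
  have hppos : (0:ℝ) < p := lt_trans zero_lt_one hp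
  have hinvp1 : 1/p < 1 := by rw [div_lt_one hppos]; exact hp
  have hinvp0 : 0 < 1/p := by positivity
  have hinvp' : 1/p' = 1 - 1/p := by linarith
  have hinvp'pos : 0 < 1/p' := by rw [hinvp']; linarith
  have hp'pos : 0 < p' := one_div_pos.mp hinvp'pos
  have hp'1 : 1 < p' := by
    have h1 : 1/p' < 1 := by rw [hinvp']; linarith
    have h2 : (1/p') * p' < 1 * p' := mul_lt_mul_of_pos_right h1 hp'pos
    rw [one_div_mul_cancel (ne_of_gt hp'pos), one_mul] at h2
    exact h2
  have hl2 : 2 ≤ l := by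
    have h : (2:ℝ) < (l:ℝ) := by nlinarith
    exact_mod_cast h.le
  have hlR : (1:ℝ) ≤ (l:ℝ) := by exact_mod_cast Nat.one_le_cast.mpr (by omega : 1 ≤ l)
  have hl1' : (0:ℝ) ≤ (l:ℝ) - 1 := by linarith
  have hln : (0:ℝ) ≤ (l:ℝ) := by positivity
  have hα : 0 ≤ (l:ℝ) - 2 - (l:ℝ)/p := by
    have h2 : 2 * p' * (1/p') < (l:ℝ) * (1/p') := mul_lt_mul_of_pos_right hl hinvp'pos
    rw [mul_assoc, mul_one_div_cancel (ne_of_gt hp'pos), mul_one] at h2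
    have h3 : (l:ℝ) * (1/p') = (l:ℝ) - (l:ℝ)/p := by rw [hinvp']; ring
    rw [h3] at h2
    linarith
  -- smoothness facts
  have hphi : ContDiff ℝ ∞ φt := hφs.of_le (by simp)
  have heta : ContDiff ℝ ∞ ηt := hηs.of_le (by simp)
  have hetad : Differentiable ℝ ηt := heta.differentiable (by simp)
  have hetad' : ContDiff ℝ ∞ (deriv ηt) := (contDiff_infty_iff_deriv.mp heta).2
  have hetad'' : ContDiff ℝ ∞ (deriv (deriv ηt)) := (contDiff_infty_iff_deriv.mp hetad').2
  -- basic eta facts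
  have hη0le : ∀ τ : ℝ, 0 ≤ τ → 0 ≤ ηt τ := by
    intro τ hτ
    have h1 : ηt (τ + 2) = 0 := hηsupp _ (by linarith)
    have h2 : ηt (τ + 2) ≤ ηt τ :=
      hηm (Set.mem_Ici.mpr hτ) (Set.mem_Ici.mpr (by linarith)) (by linarith)
    linarith
  have hηle1 : ∀ τ : ℝ, 0 ≤ τ → ηt τ ≤ 1 := by
    intro τ hτ
    have h0 : ηt 0 = 1 := hη1 0 ⟨le_refl 0, by norm_num⟩
    have h2 : ηt τ ≤ ηt 0 := hηm Set.self_mem_Ici (Set.mem_Ici.mpr hτ) hτ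
    linarith [h2, h0.le, h0.ge]
  -- the auxiliary continuous function controlling the Laplacian
  set G : EuclideanSpace ℝ (Fin n) → ℝ := fun x => ∑ i : Fin n,
    (l:ℝ) * (((l:ℝ) - 1) * (fderiv ℝ φt x (EuclideanSpace.single i 1))^2
      + |φt x| * |fderiv ℝ (fun y => fderiv ℝ φt y (EuclideanSpace.single i 1)) x
          (EuclideanSpace.single i 1)|) with hGdef
  have hGcont : Continuous G := by
    rw [hGdef]
    refine continuous_finset_sum _ (fun i _ => Continuous.mul continuous_const ?_)
    refine Continuous.add ?_ ?_
    · exact continuous_const.mul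
        (((q8_contDiff_fderiv_apply φt hphi (EuclideanSpace.single i 1)).continuous).pow 2)
    · exact (hφs.continuous.abs).mul
        ((q8_contDiff_fderiv_apply _
          (q8_contDiff_fderiv_apply φt hphi (EuclideanSpace.single i 1))
          (EuclideanSpace.single i 1)).continuous.abs)
  -- pointwise Laplacian bound
  have hLapBound : ∀ x : EuclideanSpace ℝ (Fin n),
      |eLap (fun y' => φt y' ^ l) x| ≤ φt x ^ (l-2) * G x := by
    intro x
    have hx : 0 ≤ φt x := hφ0 x
    have hpw : 0 ≤ φt x ^ (l-2) := pow_nonneg hx _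
    have hsplit : φt x ^ (l-1) = φt x ^ (l-2) * φt x := by
      rw [← pow_succ]; congr 1; omega
    have hsum : eLap (fun y' => φt y' ^ l) x = ∑ i : Fin n,
        (l:ℝ) * (((l:ℝ) - 1) * φt x ^ (l-2)
            * (fderiv ℝ φt x (EuclideanSpace.single i 1))^2
          + φt x ^ (l-1) * fderiv ℝ (fun y => fderiv ℝ φt y (EuclideanSpace.single i 1)) x
              (EuclideanSpace.single i 1)) := by
      simp only [eLap]
      exact Finset.sum_congr rfl fun i _ =>
        q8_fderiv2_pow_apply φt hphi l hl2 (EuclideanSpace.single i 1) x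
    rw [hsum, hGdef, Finset.mul_sum]
    refine (Finset.abs_sum_le_sum_abs _ _).trans (Finset.sum_le_sum fun i _ => ?_)
    set d := fderiv ℝ φt x (EuclideanSpace.single i 1) with hd
    set s := fderiv ℝ (fun y => fderiv ℝ φt y (EuclideanSpace.single i 1)) x
        (EuclideanSpace.single i 1) with hs
    have habs2 : |φt x ^ (l-1) * s| = φt x ^ (l-2) * (|φt x| * |s|) := by
      rw [abs_mul, abs_of_nonneg (pow_nonneg hx _), hsplit, abs_of_nonneg hx]; ring
    have habs1 : |((l:ℝ)-1) * φt x ^ (l-2) * d^2| = ((l:ℝ)-1) * φt x ^ (l-2) * d^2 :=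
      abs_of_nonneg (mul_nonneg (mul_nonneg hl1' hpw) (sq_nonneg d))
    calc |(l:ℝ) * (((l:ℝ)-1) * φt x ^ (l-2) * d^2 + φt x ^ (l-1) * s)|
        = (l:ℝ) * |((l:ℝ)-1) * φt x ^ (l-2) * d^2 + φt x ^ (l-1) * s| := by
          rw [abs_mul, Nat.abs_cast]
      _ ≤ (l:ℝ) * (((l:ℝ)-1) * φt x ^ (l-2) * d^2 + φt x ^ (l-2) * (|φt x| * |s|)) := by
          refine mul_le_mul_of_nonneg_left ((abs_add_le _ _).trans (le_of_eq ?_)) hln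
          rw [habs1, habs2]
      _ = φt x ^ (l-2) * ((l:ℝ) * (((l:ℝ)-1) * d^2 + |φt x| * |s|)) := by ring
  -- bounds on compact sets
  obtain ⟨C1, hC1, hC1n⟩ : ∃ C : ℝ, (∀ t ∈ Set.Icc (0:ℝ) 1, |deriv ηt t| ≤ C) ∧ 0 ≤ C := by
    obtain ⟨C₀, hC₀⟩ := isCompact_Icc.exists_bound_of_continuousOn
      (hetad'.continuous.continuousOn (s := Set.Icc (0:ℝ) 1))
    exact ⟨|C₀|, fun t ht => by
      rw [← Real.norm_eq_abs]; exact (hC₀ t ht).trans (le_abs_self _), abs_nonneg _⟩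
  obtain ⟨C2, hC2, hC2n⟩ : ∃ C : ℝ, (∀ t ∈ Set.Icc (0:ℝ) 1, |deriv (deriv ηt) t| ≤ C) ∧ 0 ≤ C := by
    obtain ⟨C₀, hC₀⟩ := isCompact_Icc.exists_bound_of_continuousOn
      (hetad''.continuous.continuousOn (s := Set.Icc (0:ℝ) 1))
    exact ⟨|C₀|, fun t ht => by
      rw [← Real.norm_eq_abs]; exact (hC₀ t ht).trans (le_abs_self _), abs_nonneg _⟩
  obtain ⟨A, hA, hAn⟩ : ∃ C : ℝ, (∀ x ∈ tsupport φt, |φt x| ≤ C) ∧ 0 ≤ C := by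
    obtain ⟨C₀, hC₀⟩ := hφc.exists_bound_of_continuousOn hφs.continuous.continuousOn
    exact ⟨|C₀|, fun x hx => by
      rw [← Real.norm_eq_abs]; exact (hC₀ x hx).trans (le_abs_self _), abs_nonneg _⟩
  obtain ⟨CG, hCG, hCGn⟩ : ∃ C : ℝ, (∀ x ∈ tsupport φt, |G x| ≤ C) ∧ 0 ≤ C := by
    obtain ⟨C₀, hC₀⟩ := hφc.exists_bound_of_continuousOn hGcont.continuousOn
    exact ⟨|C₀|, fun x hx => by
      rw [← Real.norm_eq_abs]; exact (hC₀ x hx).trans (le_abs_self _), abs_nonneg _⟩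
  -- derivative bounds for η^l
  have hη1b : ∀ τ : ℝ, 0 ≤ τ → τ ≤ 1 →
      |deriv (fun t => ηt t ^ l) τ| ≤ ηt τ ^ (l-2) * ((l:ℝ) * C1) := by
    intro τ h0 h1
    have hb0 := hη0le τ h0
    have hb1 := hηle1 τ h0
    have hpw : 0 ≤ ηt τ ^ (l-2) := pow_nonneg hb0 _
    have h2 : ηt τ ^ (l-1) ≤ ηt τ ^ (l-2) := pow_le_pow_of_le_one hb0 hb1 (by omega)
    rw [q8_deriv_pow_comp ηt heta l]
    rw [abs_mul, abs_mul, Nat.abs_cast, abs_of_nonneg (pow_nonneg hb0 _)]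
    calc (l:ℝ) * (ηt τ ^ (l-1) * |deriv ηt τ|)
        ≤ (l:ℝ) * (ηt τ ^ (l-2) * C1) := by
          refine mul_le_mul_of_nonneg_left ?_ hln
          exact mul_le_mul h2 (hC1 τ ⟨h0, h1⟩) (abs_nonneg _) hpw
      _ = ηt τ ^ (l-2) * ((l:ℝ) * C1) := by ring
  have hη2b : ∀ τ : ℝ, 0 ≤ τ → τ ≤ 1 →
      |deriv (deriv (fun t => ηt t ^ l)) τ|
        ≤ ηt τ ^ (l-2) * ((l:ℝ) * ((l:ℝ) * C1^2 + C2)) := by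
    intro τ h0 h1
    have hb0 := hη0le τ h0
    have hb1 := hηle1 τ h0
    have hpw : 0 ≤ ηt τ ^ (l-2) := pow_nonneg hb0 _
    have hpw1 : 0 ≤ ηt τ ^ (l-1) := pow_nonneg hb0 _
    have h2 : ηt τ ^ (l-1) ≤ ηt τ ^ (l-2) := pow_le_pow_of_le_one hb0 hb1 (by omega)
    rw [q8_deriv2_pow_comp ηt heta l hl2]
    have e1 := hC1 τ ⟨h0, h1⟩
    have e2 := hC2 τ ⟨h0, h1⟩
    have t1 : ηt τ ^ (l-1) * |deriv (deriv ηt) τ| ≤ ηt τ ^ (l-2) * C2 :=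
      mul_le_mul h2 e2 (abs_nonneg _) hpw
    have t2 : (deriv ηt τ)^2 ≤ C1^2 := by
      rw [← sq_abs]; exact pow_le_pow_left₀ (abs_nonneg _) e1 2
    have t3 : ηt τ ^ (l-2) * (deriv ηt τ)^2 ≤ ηt τ ^ (l-2) * C1^2 :=
      mul_le_mul_of_nonneg_left t2 hpw
    have t4 : ((l:ℝ)-1) * (ηt τ ^ (l-2) * (deriv ηt τ)^2)
        ≤ (l:ℝ) * (ηt τ ^ (l-2) * C1^2) :=
      mul_le_mul (by linarith) t3 (mul_nonneg hpw (sq_nonneg _)) hln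
    have habs1 : |((l:ℝ)-1) * ηt τ ^ (l-2) * (deriv ηt τ)^2|
        = ((l:ℝ)-1) * (ηt τ ^ (l-2) * (deriv ηt τ)^2) := by
      rw [abs_of_nonneg (mul_nonneg (mul_nonneg hl1' hpw) (sq_nonneg _))]; ring
    have habs2 : |ηt τ ^ (l-1) * deriv (deriv ηt) τ|
        = ηt τ ^ (l-1) * |deriv (deriv ηt) τ| := by
      rw [abs_mul, abs_of_nonneg hpw1]
    calc |(l:ℝ) * (((l:ℝ)-1) * ηt τ ^ (l-2) * (deriv ηt τ)^2
            + ηt τ ^ (l-1) * deriv (deriv ηt) τ)|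
        = (l:ℝ) * |((l:ℝ)-1) * ηt τ ^ (l-2) * (deriv ηt τ)^2
            + ηt τ ^ (l-1) * deriv (deriv ηt) τ| := by rw [abs_mul, Nat.abs_cast]
      _ ≤ (l:ℝ) * (((l:ℝ)-1) * (ηt τ ^ (l-2) * (deriv ηt τ)^2)
            + ηt τ ^ (l-1) * |deriv (deriv ηt) τ|) := by
          refine mul_le_mul_of_nonneg_left ((abs_add_le _ _).trans (le_of_eq ?_)) hln
          rw [habs1, habs2]
      _ ≤ (l:ℝ) * ((l:ℝ) * (ηt τ ^ (l-2) * C1^2) + ηt τ ^ (l-2) * C2) := by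
          exact mul_le_mul_of_nonneg_left (add_le_add t4 t1) hln
      _ = ηt τ ^ (l-2) * ((l:ℝ) * ((l:ℝ) * C1^2 + C2)) := by ring
  -- rpow rewriting helper
  have hrw : ∀ x : ℝ, 0 < x →
      (x ^ l : ℝ) ^ (-(1/p) : ℝ) * x ^ (l-2) = x ^ ((l:ℝ) - 2 - (l:ℝ)/p) := by
    intro x hx
    rw [← Real.rpow_natCast x l, ← Real.rpow_natCast x (l-2), ← Real.rpow_mul hx.le,
      ← Real.rpow_add hx, Nat.cast_sub hl2]
    congr 1
    push_cast
    ring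
  -- the main pointwise bound
  set Cb : ℝ := ((l:ℝ) * ((l:ℝ) * C1^2 + C2) + (l:ℝ) * C1) * (A+1)^2 + CG with hCbdef
  have hCbn : 0 ≤ Cb := by
    rw [hCbdef]
    have h1 : (0:ℝ) ≤ (A+1)^2 := sq_nonneg _
    have h2 : (0:ℝ) ≤ (l:ℝ) * ((l:ℝ) * C1^2 + C2) + (l:ℝ) * C1 :=
      add_nonneg (mul_nonneg hln (add_nonneg (mul_nonneg hln (sq_nonneg _)) hC2n))
        (mul_nonneg hln hC1n)
    exact add_nonneg (mul_nonneg h2 h1) hCGn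
  set Mf : ℝ := (A+1) ^ ((l:ℝ) - 2 - (l:ℝ)/p) * Cb with hMfdef
  have MAIN : ∀ y : EuclideanSpace ℝ (Fin n), ∀ τ : ℝ, 0 ≤ τ →
      0 < φt y ^ l * ηt τ ^ l →
      (φt y ^ l) ^ (-(1 / p) : ℝ) * (ηt τ ^ l) ^ (-(1 / p) : ℝ) *
        |deriv (deriv (fun t => ηt t ^ l)) τ * φt y ^ l
          - deriv (fun t => ηt t ^ l) τ * φt y ^ l
          - ηt τ ^ l * eLap (fun y' => φt y' ^ l) y| ≤ Mf := by
    intro y τ hτ hpos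
    have haln : φt y ^ l ≠ 0 := by
      intro h; rw [h, zero_mul] at hpos; exact lt_irrefl 0 hpos
    have hbln : ηt τ ^ l ≠ 0 := by
      intro h; rw [h, mul_zero] at hpos; exact lt_irrefl 0 hpos
    have hane : φt y ≠ 0 := fun h => haln (by rw [h]; exact zero_pow (by omega))
    have hbne : ηt τ ≠ 0 := fun h => hbln (by rw [h]; exact zero_pow (by omega))
    have ha : 0 < φt y := (hφ0 y).lt_of_ne (Ne.symm hane)
    have hb : 0 < ηt τ := (hη0le τ hτ).lt_of_ne (Ne.symm hbne)
    have hτ1 : τ ≤ 1 := by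
      by_contra h
      push_neg at h
      exact hbne (hηsupp τ h)
    have hb1 : ηt τ ≤ 1 := hηle1 τ hτ
    have hyK : y ∈ tsupport φt := subset_tsupport _ hane
    have haA : φt y ≤ A + 1 := by
      have := (le_abs_self (φt y)).trans (hA y hyK); linarith
    have hCGy : G y ≤ CG := (le_abs_self _).trans (hCG y hyK)
    have E1 := hη2b τ hτ hτ1
    have E2 := hη1b τ hτ hτ1
    have E3 : |eLap (fun y' => φt y' ^ l) y| ≤ φt y ^ (l-2) * CG :=
      (hLapBound y).trans (mul_le_mul_of_nonneg_left hCGy (pow_nonneg ha.le _))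
    have E4 : φt y ^ l ≤ φt y ^ (l-2) * (A+1)^2 := by
      have h : φt y ^ l = φt y ^ (l-2) * φt y ^ 2 := by rw [← pow_add]; congr 1; omega
      rw [h]
      exact mul_le_mul_of_nonneg_left (pow_le_pow_left₀ ha.le haA 2) (pow_nonneg ha.le _)
    have E5 : ηt τ ^ l ≤ ηt τ ^ (l-2) := pow_le_pow_of_le_one hb.le hb1 (by omega)
    have hnn1 : (0:ℝ) ≤ ηt τ ^ (l-2) * ((l:ℝ) * ((l:ℝ) * C1^2 + C2)) :=
      mul_nonneg (pow_nonneg hb.le _)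
        (mul_nonneg hln (add_nonneg (mul_nonneg hln (sq_nonneg _)) hC2n))
    have hnn2 : (0:ℝ) ≤ ηt τ ^ (l-2) * ((l:ℝ) * C1) :=
      mul_nonneg (pow_nonneg hb.le _) (mul_nonneg hln hC1n)
    have EB : |deriv (deriv (fun t => ηt t ^ l)) τ * φt y ^ l
          - deriv (fun t => ηt t ^ l) τ * φt y ^ l
          - ηt τ ^ l * eLap (fun y' => φt y' ^ l) y|
        ≤ (φt y ^ (l-2) * ηt τ ^ (l-2)) * Cb := by
      calc |deriv (deriv (fun t => ηt t ^ l)) τ * φt y ^ l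
            - deriv (fun t => ηt t ^ l) τ * φt y ^ l
            - ηt τ ^ l * eLap (fun y' => φt y' ^ l) y|
          ≤ |deriv (deriv (fun t => ηt t ^ l)) τ * φt y ^ l
              - deriv (fun t => ηt t ^ l) τ * φt y ^ l|
            + |ηt τ ^ l * eLap (fun y' => φt y' ^ l) y| := abs_sub _ _
        _ ≤ (|deriv (deriv (fun t => ηt t ^ l)) τ * φt y ^ l|
              + |deriv (fun t => ηt t ^ l) τ * φt y ^ l|)
            + |ηt τ ^ l * eLap (fun y' => φt y' ^ l) y| :=
            add_le_add_left (abs_sub _ _) _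
        _ = |deriv (deriv (fun t => ηt t ^ l)) τ| * (φt y ^ l)
              + |deriv (fun t => ηt t ^ l) τ| * (φt y ^ l)
              + ηt τ ^ l * |eLap (fun y' => φt y' ^ l) y| := by
            rw [abs_mul, abs_mul, abs_mul, abs_of_nonneg (pow_nonneg ha.le l),
              abs_of_nonneg (pow_nonneg hb.le l)]
        _ ≤ (ηt τ ^ (l-2) * ((l:ℝ) * ((l:ℝ) * C1^2 + C2))) * (φt y ^ (l-2) * (A+1)^2)
              + (ηt τ ^ (l-2) * ((l:ℝ) * C1)) * (φt y ^ (l-2) * (A+1)^2)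
              + ηt τ ^ (l-2) * (φt y ^ (l-2) * CG) := by
            refine add_le_add (add_le_add ?_ ?_) ?_
            · exact mul_le_mul E1 E4 (pow_nonneg ha.le l) hnn1
            · exact mul_le_mul E2 E4 (pow_nonneg ha.le l) hnn2
            · exact mul_le_mul E5 E3 (abs_nonneg _) (pow_nonneg hb.le _)
        _ = (φt y ^ (l-2) * ηt τ ^ (l-2)) * Cb := by rw [hCbdef]; ring
    have hXn : (0:ℝ) ≤ (φt y ^ l : ℝ) ^ (-(1/p) : ℝ) * (ηt τ ^ l) ^ (-(1/p) : ℝ) :=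
      mul_nonneg (Real.rpow_nonneg (pow_nonneg ha.le _) _)
        (Real.rpow_nonneg (pow_nonneg hb.le _) _)
    calc (φt y ^ l) ^ (-(1 / p) : ℝ) * (ηt τ ^ l) ^ (-(1 / p) : ℝ) *
          |deriv (deriv (fun t => ηt t ^ l)) τ * φt y ^ l
            - deriv (fun t => ηt t ^ l) τ * φt y ^ l
            - ηt τ ^ l * eLap (fun y' => φt y' ^ l) y|
        ≤ (φt y ^ l) ^ (-(1 / p) : ℝ) * (ηt τ ^ l) ^ (-(1 / p) : ℝ) *
            ((φt y ^ (l-2) * ηt τ ^ (l-2)) * Cb) := mul_le_mul_of_nonneg_left EB hXn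
      _ = ((φt y ^ l) ^ (-(1/p) : ℝ) * φt y ^ (l-2))
            * ((ηt τ ^ l) ^ (-(1/p) : ℝ) * ηt τ ^ (l-2)) * Cb := by ring
      _ = φt y ^ ((l:ℝ) - 2 - (l:ℝ)/p) * ηt τ ^ ((l:ℝ) - 2 - (l:ℝ)/p) * Cb := by
          rw [hrw _ ha, hrw _ hb]
      _ ≤ (A+1) ^ ((l:ℝ) - 2 - (l:ℝ)/p) * 1 * Cb := by
          refine mul_le_mul (mul_le_mul ?_ ?_ ?_ ?_) le_rfl hCbn ?_
          · exact Real.rpow_le_rpow ha.le haA hα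
          · exact Real.rpow_le_one hb.le hb1 hα
          · exact Real.rpow_nonneg hb.le _
          · exact Real.rpow_nonneg (by linarith) _
          · exact mul_nonneg (Real.rpow_nonneg (by linarith) _) zero_le_one
      _ = Mf := by rw [hMfdef, mul_one]
  constructor
  · exact ⟨Mf, MAIN⟩
  · -- finiteness of the integral
    set S : Set (EuclideanSpace ℝ (Fin n) × ℝ) :=
      {q : EuclideanSpace ℝ (Fin n) × ℝ | 0 ≤ q.2 ∧ φt q.1 ^ l * ηt q.2 ^ l ≠ 0} with hSdef
    have hfcont : Continuous fun q : EuclideanSpace ℝ (Fin n) × ℝ =>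
        φt q.1 ^ l * ηt q.2 ^ l :=
      ((hφs.continuous.comp continuous_fst).pow l).mul
        ((hηs.continuous.comp continuous_snd).pow l)
    have hSm : MeasurableSet S := by
      have h1 : S = {q : EuclideanSpace ℝ (Fin n) × ℝ | 0 ≤ q.2}
          ∩ {q : EuclideanSpace ℝ (Fin n) × ℝ | φt q.1 ^ l * ηt q.2 ^ l ≠ 0} := rfl
      rw [h1]
      exact (measurableSet_le measurable_const measurable_snd).inter
        ((isOpen_compl_singleton.preimage hfcont).measurableSet)
    have hSsub : S ⊆ (tsupport φt) ×ˢ Set.Icc (0:ℝ) 1 := by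
      rintro ⟨y, τ⟩ ⟨hτ, hne⟩
      have hφne : φt y ≠ 0 := by
        intro h
        exact hne (by rw [h, zero_pow (by omega : l ≠ 0), zero_mul])
      have hηne : ηt τ ≠ 0 := by
        intro h
        exact hne (by rw [h, zero_pow (by omega : l ≠ 0), mul_zero])
      have hτ1 : τ ≤ 1 := by
        by_contra h
        push_neg at h
        exact hηne (hηsupp τ h)
      exact ⟨subset_tsupport _ hφne, hτ, hτ1⟩
    have hptwise : ∀ q ∈ S,
        ENNReal.ofReal ((φt q.1 ^ l) ^ (-(p' / p) : ℝ) * (ηt q.2 ^ l) ^ (-(p' / p) : ℝ) *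
          |deriv (deriv (fun t => ηt t ^ l)) q.2 * φt q.1 ^ l
            - deriv (fun t => ηt t ^ l) q.2 * φt q.1 ^ l
            - ηt q.2 ^ l * eLap (fun y' => φt y' ^ l) q.1| ^ p')
        ≤ ENNReal.ofReal (Mf ^ p') := by
      rintro ⟨y, τ⟩ ⟨hτ, hne⟩
      have hpos : 0 < φt y ^ l * ηt τ ^ l :=
        lt_of_le_of_ne (mul_nonneg (pow_nonneg (hφ0 _) _) (pow_nonneg (hη0le τ hτ) _))
          (Ne.symm hne)
      have hbd := MAIN y τ hτ hpos
      apply ENNReal.ofReal_le_ofReal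
      have hX : (0:ℝ) ≤ φt y ^ l := pow_nonneg (hφ0 _) _
      have hY : (0:ℝ) ≤ ηt τ ^ l := pow_nonneg (hη0le τ hτ) _
      have hexp : ∀ x : ℝ, 0 ≤ x → (x ^ (-(1/p) : ℝ)) ^ p' = x ^ (-(p'/p) : ℝ) := by
        intro x hx
        rw [← Real.rpow_mul hx]
        congr 1
        ring
      have hkey : (φt y ^ l) ^ (-(p' / p) : ℝ) * (ηt τ ^ l) ^ (-(p' / p) : ℝ) *
            |deriv (deriv (fun t => ηt t ^ l)) τ * φt y ^ l
              - deriv (fun t => ηt t ^ l) τ * φt y ^ l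
              - ηt τ ^ l * eLap (fun y' => φt y' ^ l) y| ^ p'
          = ((φt y ^ l) ^ (-(1 / p) : ℝ) * (ηt τ ^ l) ^ (-(1 / p) : ℝ) *
              |deriv (deriv (fun t => ηt t ^ l)) τ * φt y ^ l
                - deriv (fun t => ηt t ^ l) τ * φt y ^ l
                - ηt τ ^ l * eLap (fun y' => φt y' ^ l) y|) ^ p' := by
        rw [Real.mul_rpow (mul_nonneg (Real.rpow_nonneg hX _) (Real.rpow_nonneg hY _))
            (abs_nonneg _),
          Real.mul_rpow (Real.rpow_nonneg hX _) (Real.rpow_nonneg hY _),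
          hexp _ hX, hexp _ hY]
      rw [hkey]
      have hgn : (0:ℝ) ≤ (φt y ^ l) ^ (-(1 / p) : ℝ) * (ηt τ ^ l) ^ (-(1 / p) : ℝ) *
          |deriv (deriv (fun t => ηt t ^ l)) τ * φt y ^ l
            - deriv (fun t => ηt t ^ l) τ * φt y ^ l
            - ηt τ ^ l * eLap (fun y' => φt y' ^ l) y| :=
        mul_nonneg (mul_nonneg (Real.rpow_nonneg hX _) (Real.rpow_nonneg hY _)) (abs_nonneg _)
      exact Real.rpow_le_rpow hgn hbd (le_of_lt hp'pos)
    calc (∫⁻ q : EuclideanSpace ℝ (Fin n) × ℝ in S,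
          ENNReal.ofReal ((φt q.1 ^ l) ^ (-(p' / p) : ℝ) * (ηt q.2 ^ l) ^ (-(p' / p) : ℝ) *
            |deriv (deriv (fun t => ηt t ^ l)) q.2 * φt q.1 ^ l
              - deriv (fun t => ηt t ^ l) q.2 * φt q.1 ^ l
              - ηt q.2 ^ l * eLap (fun y' => φt y' ^ l) q.1| ^ p'))
        ≤ ∫⁻ _ in S, ENNReal.ofReal (Mf ^ p') := setLIntegral_mono' hSm hptwise
      _ = ENNReal.ofReal (Mf ^ p') * volume S := setLIntegral_const _ _
      _ ≤ ENNReal.ofReal (Mf ^ p') * volume ((tsupport φt) ×ˢ Set.Icc (0:ℝ) 1) :=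
          mul_le_mul_right (measure_mono hSsub) _
      _ < ⊤ := by
          rw [MeasureTheory.Measure.volume_eq_prod, MeasureTheory.Measure.prod_prod]
          exact ENNReal.mul_lt_top ENNReal.ofReal_lt_top
            (ENNReal.mul_lt_top hφc.measure_lt_top measure_Icc_lt_top)
end
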